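/- There exists a set Z ⊆ ℕ → ℕ of cardinality 𝔡 such that every ≤*-bounded subset of Z has cardinality less than 𝔡; equivalently, every subset of Z belonging to K_σ has size less than 𝔡. -/
import Mathlib


open Filter Set

/-- Eventual domination: `α ≤* β` iff `α n ≤ β n` for all but finitely many `n`. -/
def EvDom (α β : ℕ → ℕ) : Prop := ∀ᶠ n in atTop, α n ≤ β n

/-- The dominating number `𝔡`: the least cardinality of a cofinal subset of
`(ℕ → ℕ, ≤*)`. -/
noncomputable def dNum : Cardinal :=
  sInf {c | ∃ S : Set (ℕ → ℕ), (∀ α, ∃ β ∈ S, EvDom α β) ∧ Cardinal.mk S = c}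

lemma dNum_set_nonempty :
    {c | ∃ S : Set (ℕ → ℕ), (∀ α, ∃ β ∈ S, EvDom α β) ∧ Cardinal.mk S = c}.Nonempty :=
  ⟨Cardinal.mk (univ : Set (ℕ → ℕ)), univ,
    fun α => ⟨α, mem_univ α, Eventually.of_forall fun _ => le_rfl⟩, rfl⟩

lemma dNum_le {S : Set (ℕ → ℕ)} (h : ∀ α, ∃ β ∈ S, EvDom α β) : dNum ≤ Cardinal.mk S :=
  csInf_le' ⟨S, h, rfl⟩

lemma exists_not_evdom {T : Set (ℕ → ℕ)} (h : Cardinal.mk T < dNum) :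
    ∃ g : ℕ → ℕ, ∀ t ∈ T, ¬ EvDom g t := by
  by_contra hc
  push_neg at hc
  exact absurd (dNum_le fun α => by simpa using hc α) (not_le_of_gt h)

lemma aleph0_le_dNum : Cardinal.aleph0 ≤ dNum := by
  refine le_csInf dNum_set_nonempty ?_
  rintro c ⟨S, hS, rfl⟩
  by_contra hc
  push_neg at hc
  have hf : S.Finite := Cardinal.lt_aleph0_iff_set_finite.1 hc
  set g : ℕ → ℕ := fun n => (hf.toFinset.sup fun t => t n) + 1 with hg
  obtain ⟨β, hβS, hβ⟩ := hS g
  obtain ⟨n, hn⟩ := hβ.exists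
  have : β n < g n := Nat.lt_succ_of_le (Finset.le_sup (f := fun t => t n) (hf.mem_toFinset.2 hβS))
  omega

/-- There is a set `Z ⊆ ℕ → ℕ` of cardinality `𝔡` such that every
`≤*`-bounded subset of `Z` has cardinality less than `𝔡`. -/
theorem stmt19 :
    ∃ Z : Set (ℕ → ℕ), Cardinal.mk Z = dNum ∧
      ∀ S ⊆ Z, (∃ γ : ℕ → ℕ, ∀ α ∈ S, EvDom α γ) → Cardinal.mk S < dNum := by
  classical
  have hmem : dNum ∈ {c | ∃ S : Set (ℕ → ℕ), (∀ α, ∃ β ∈ S, EvDom α β) ∧ Cardinal.mk S = c} :=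
    csInf_mem dNum_set_nonempty
  obtain ⟨D, hD, hDcard⟩ := hmem
  set I := dNum.ord.ToType with hI
  have hmkI : Cardinal.mk I = dNum := by
    rw [hI, Cardinal.mk_toType, Cardinal.card_ord]
  -- an enumeration of D by I
  have : Cardinal.mk I = Cardinal.mk D := by rw [hmkI, hDcard]
  obtain ⟨e⟩ := Cardinal.eq.1 this
  set f : I → (ℕ → ℕ) := fun i => (e i : ℕ → ℕ) with hf
  have hfD : ∀ β ∈ D, ∃ i, f i = β := by
    intro β hβ
    exact ⟨e.symm ⟨β, hβ⟩, by simp [hf]⟩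
  -- choose witnesses of non-domination
  have H : ∀ i : I, ∃ g : ℕ → ℕ, ∀ j < i, ¬ EvDom g (f j) := by
    intro i
    have hlt : Cardinal.mk (f '' Set.Iio i) < dNum :=
      (Cardinal.mk_image_le).trans_lt (Cardinal.mk_Iio_ord_toType i)
    obtain ⟨g, hg⟩ := exists_not_evdom hlt
    exact ⟨g, fun j hj => hg (f j) ⟨j, hj, rfl⟩⟩
  choose h hh using H
  set g : I → (ℕ → ℕ) := fun i n => max (h i n) (f i n) with hgdef
  refine ⟨Set.range g, ?_, ?_⟩
  · -- cardinality is dNum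
    have hdom : ∀ α, ∃ β ∈ Set.range g, EvDom α β := by
      intro α
      obtain ⟨β, hβD, hβ⟩ := hD α
      obtain ⟨i, rfl⟩ := hfD β hβD
      exact ⟨g i, mem_range_self i, hβ.mono fun n hn => hn.trans (le_max_right _ _)⟩
    refine le_antisymm ?_ (dNum_le hdom)
    calc Cardinal.mk (Set.range g) ≤ Cardinal.mk I := Cardinal.mk_range_le
      _ = dNum := hmkI
  · rintro S hSZ ⟨γ, hγ⟩
    obtain ⟨β, hβD, hβ⟩ := hD γ
    obtain ⟨i, rfl⟩ := hfD β hβD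
    have hsub : S ⊆ g '' Set.Iic i := by
      intro α hα
      obtain ⟨j, rfl⟩ := hSZ hα
      refine ⟨j, ?_, rfl⟩
      by_contra hji
      have hij : i < j := lt_of_not_ge fun hle => hji hle
      have h1 : EvDom (g j) (f i) :=
        ((hγ _ hα).and hβ).mono fun n hn => hn.1.trans hn.2
      have h2 : EvDom (h j) (f i) :=
        h1.mono fun n hn => le_trans (le_max_left _ _) hn
      exact hh j i hij h2
    calc Cardinal.mk S ≤ Cardinal.mk (g '' Set.Iic i) := Cardinal.mk_le_mk_of_subset hsub
      _ ≤ Cardinal.mk (Set.Iic i) := Cardinal.mk_image_le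
      _ ≤ Cardinal.mk (Set.Iio i) + 1 := by
            rw [← Set.Iio_insert]; exact Cardinal.mk_insert_le
      _ < dNum := Cardinal.add_lt_of_lt aleph0_le_dNum (Cardinal.mk_Iio_ord_toType i)
            (Cardinal.one_lt_aleph0.trans_le aleph0_le_dNum)
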